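/- arXiv:2403.03164 — 2 statements merged into one kernel-verified Lean document; each statement's English description precedes it below -/
import Mathlib

section
/- Let N ⊆ ℝⁿ and let h : N → M be a homeomorphism onto the closed set M ⊆ ℝⁿ such that |h(x) - x| is bounded on bounded sets. Then N is closed in ℝⁿ. -/
/-- if `h : N ≃ₜ M` is a homeomorphism onto a closed set `M ⊆ ℝⁿ`
with `‖h x - x‖` bounded on bounded sets, then `N` is closed. -/
theorem stmt5 {n : ℕ} (N M : Set (EuclideanSpace ℝ (Fin n)))
    (hM : IsClosed M) (h : N ≃ₜ M)
    (ε : EuclideanSpace ℝ (Fin n) → ℝ)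
    (hεbdd : ∀ R : ℝ, 0 < R → ∃ C : ℝ, ∀ x : EuclideanSpace ℝ (Fin n), ‖x‖ ≤ R → ε x ≤ C)
    (hh : ∀ x : N, ‖(h x : EuclideanSpace ℝ (Fin n)) - (x : EuclideanSpace ℝ (Fin n))‖ ≤ ε x) :
    IsClosed N := by
  apply IsSeqClosed.isClosed
  intro u x hu hx
  -- u is bounded
  obtain ⟨R, hR⟩ : ∃ R : ℝ, ∀ i, ‖u i‖ ≤ R := by
    have hb : Bornology.IsBounded (Set.range u) := Metric.isBounded_range_of_tendsto u hx
    obtain ⟨R, hR⟩ := hb.exists_norm_le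
    exact ⟨R, fun i => hR _ (Set.mem_range_self i)⟩
  obtain ⟨C, hC⟩ := hεbdd (max R 1) (by positivity)
  -- the images are in a compact set
  set v : ℕ → EuclideanSpace ℝ (Fin n) := fun i => (h ⟨u i, hu i⟩ : EuclideanSpace ℝ (Fin n)) with hv
  have hvK : ∀ i, v i ∈ Metric.closedBall (0 : EuclideanSpace ℝ (Fin n)) (max R 1 + C) ∩ M := by
    intro i
    refine ⟨?_, (h ⟨u i, hu i⟩).2⟩
    rw [Metric.mem_closedBall, dist_zero_right]
    have h1 : ‖v i - u i‖ ≤ ε (u i) := hh ⟨u i, hu i⟩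
    have h2 : ε (u i) ≤ C := hC _ ((hR i).trans (le_max_left _ _))
    calc ‖v i‖ = ‖(v i - u i) + u i‖ := by rw [sub_add_cancel]
      _ ≤ ‖v i - u i‖ + ‖u i‖ := norm_add_le _ _
      _ ≤ C + max R 1 := add_le_add (h1.trans h2) ((hR i).trans (le_max_left _ _))
      _ = max R 1 + C := by ring
  have hK : IsCompact (Metric.closedBall (0 : EuclideanSpace ℝ (Fin n)) (max R 1 + C) ∩ M) :=
    (isCompact_closedBall _ _).inter_right hM
  obtain ⟨y, hyK, φ, hφ, hvy⟩ := hK.tendsto_subseq hvK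
  have hyM : y ∈ M := hyK.2
  -- convergence in the subtype M
  have hwM : Filter.Tendsto (fun i => h ⟨u (φ i), hu (φ i)⟩) Filter.atTop (nhds ⟨y, hyM⟩) := by
    rw [tendsto_subtype_rng]
    exact hvy
  have hsymm : Filter.Tendsto (fun i => h.symm (h ⟨u (φ i), hu (φ i)⟩)) Filter.atTop
      (nhds (h.symm ⟨y, hyM⟩)) := (h.symm.continuous.tendsto _).comp hwM
  simp only [Homeomorph.symm_apply_apply] at hsymm
  have hcoe : Filter.Tendsto (fun i => u (φ i)) Filter.atTop
      (nhds ((h.symm ⟨y, hyM⟩ : N) : EuclideanSpace ℝ (Fin n))) :=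
    (continuous_subtype_val.tendsto _).comp hsymm
  have hx' : Filter.Tendsto (fun i => u (φ i)) Filter.atTop (nhds x) :=
    hx.comp hφ.tendsto_atTop
  have : x = ((h.symm ⟨y, hyM⟩ : N) : EuclideanSpace ℝ (Fin n)) := tendsto_nhds_unique hx' hcoe
  rw [this]
  exact (h.symm ⟨y, hyM⟩).2
end

section
/- On the Grassmannian of m-dimensional linear subspaces of ℝⁿ, the function ρ(P, Q) := sup_{a ∈ P, |a|=1} inf_{b ∈ Q} |a - b| is symmetric: ρ(P, Q) = ρ(Q, P) for all m-dimensional subspaces P, Q. -/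
/-!
Let `T = π_Q ∘ ι_P : P → Q`. For a unit vector `a ∈ P`, Pythagoras gives
`dist(a, Q)² = 1 - ‖T a‖²`, so `ρ(P, Q)² = 1 - μ(T)²` where `μ(T) = min_{‖a‖ = 1} ‖T a‖`.
The adjoint of `T` is `π_P ∘ ι_Q`, so it suffices that `μ(T*) = μ(T)` when `dim P = dim Q`:
if `c ‖x‖ ≤ ‖T x‖` with `c > 0` then `T` is bijective, and for `y = T x` we get
`‖y‖² = ⟪x, T* y⟫ ≤ ‖x‖ ‖T* y‖ ≤ ‖y‖ ‖T* y‖ / c`.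
-/

/-- The (asymmetric) gap `ρ(P,Q) = sup_{a ∈ P, ‖a‖=1} dist(a, Q)` between linear
subspaces of euclidean space. -/
noncomputable def rho {n : ℕ}
    (P Q : Submodule ℝ (EuclideanSpace ℝ (Fin n))) : ℝ :=
  sSup {d : ℝ | ∃ a ∈ P, ‖a‖ = 1 ∧ d = Metric.infDist a (Q : Set (EuclideanSpace ℝ (Fin n)))}

open Set Metric Module ContinuousLinearMap

namespace ContinuousLinearMap

section MinModulus

variable {E F : Type*} [NormedAddCommGroup E] [NormedSpace ℝ E] [NormedAddCommGroup F]
  [NormedSpace ℝ F]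

/-- Equal to `0` when `E` is trivial, the unit sphere then being empty. -/
noncomputable def minModulus (T : E →L[ℝ] F) : ℝ :=
  sInf ((fun x => ‖T x‖) '' sphere (0 : E) 1)

theorem minModulus_nonneg (T : E →L[ℝ] F) : 0 ≤ minModulus T :=
  Real.sInf_nonneg <| by rintro _ ⟨x, -, rfl⟩; exact norm_nonneg _

theorem minModulus_mul_norm_le (T : E →L[ℝ] F) (x : E) : minModulus T * ‖x‖ ≤ ‖T x‖ := by
  rcases eq_or_ne x 0 with rfl | hx
  · simp
  have hx' : ‖x‖ ≠ 0 := norm_ne_zero_iff.mpr hx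
  have hle : minModulus T ≤ ‖T (‖x‖⁻¹ • x)‖ :=
    csInf_le ⟨0, by rintro _ ⟨y, -, rfl⟩; exact norm_nonneg _⟩
      ⟨‖x‖⁻¹ • x, by simp [norm_smul, hx'], rfl⟩
  rw [map_smul, norm_smul, norm_inv, norm_norm] at hle
  rwa [le_inv_mul_iff₀ (norm_pos_iff.mpr hx), mul_comm] at hle

theorem le_minModulus [Nontrivial E] (T : E →L[ℝ] F) {c : ℝ}
    (h : ∀ x, c * ‖x‖ ≤ ‖T x‖) : c ≤ minModulus T :=
  le_csInf ((NormedSpace.sphere_nonempty.mpr zero_le_one).image _) <| by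
    rintro _ ⟨x, hx, rfl⟩
    simpa [mem_sphere_zero_iff_norm.mp hx] using h x

end MinModulus

section Adjoint

variable {E F : Type*} [NormedAddCommGroup E] [InnerProductSpace ℝ E] [FiniteDimensional ℝ E]
  [NormedAddCommGroup F] [InnerProductSpace ℝ F] [FiniteDimensional ℝ F]

theorem mul_norm_le_norm_adjoint_apply (hd : finrank ℝ E = finrank ℝ F) (T : E →L[ℝ] F)
    {c : ℝ} (h : ∀ x, c * ‖x‖ ≤ ‖T x‖) (y : F) : c * ‖y‖ ≤ ‖adjoint T y‖ := by
  rcases le_or_gt c 0 with hc | hc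
  · exact (mul_nonpos_of_nonpos_of_nonneg hc (norm_nonneg y)).trans (norm_nonneg _)
  have hinj : Function.Injective T := by
    refine (injective_iff_map_eq_zero T).mpr fun x hx => norm_eq_zero.mp ?_
    have := h x
    rw [hx, norm_zero] at this
    exact le_antisymm (nonpos_of_mul_nonpos_right this hc) (norm_nonneg x)
  obtain ⟨x, rfl⟩ :=
    (LinearMap.injective_iff_surjective_of_finrank_eq_finrank hd (f := (T : E →ₗ[ℝ] F))).mp hinj y
  have hsq : ‖T x‖ ^ 2 ≤ ‖x‖ * ‖adjoint T (T x)‖ := by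
    rw [← real_inner_self_eq_norm_sq, ← adjoint_inner_right]
    exact real_inner_le_norm _ _
  change c * ‖T x‖ ≤ ‖adjoint T (T x)‖
  rcases (norm_nonneg (T x)).eq_or_lt with h0 | hpos
  · rw [← h0, mul_zero]; exact norm_nonneg _
  refine le_of_mul_le_mul_right ?_ hpos
  nlinarith [h x, norm_nonneg (adjoint T (T x))]

theorem minModulus_le_minModulus_adjoint (hd : finrank ℝ E = finrank ℝ F) (T : E →L[ℝ] F) :
    minModulus T ≤ minModulus (adjoint T) := by
  rcases subsingleton_or_nontrivial E with hE | hE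
  · simpa [minModulus, sphere_eq_empty_of_subsingleton one_ne_zero] using
      minModulus_nonneg (adjoint T)
  have : Nontrivial F := nontrivial_of_finrank_pos (hd ▸ finrank_pos)
  exact le_minModulus _ (mul_norm_le_norm_adjoint_apply hd T (minModulus_mul_norm_le T))

theorem minModulus_adjoint (hd : finrank ℝ E = finrank ℝ F) (T : E →L[ℝ] F) :
    minModulus (adjoint T) = minModulus T := by
  refine le_antisymm ?_ (minModulus_le_minModulus_adjoint hd T)
  simpa using minModulus_le_minModulus_adjoint hd.symm (adjoint T)

end Adjoint

end ContinuousLinearMap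

namespace Submodule

variable {E : Type*} [NormedAddCommGroup E] [InnerProductSpace ℝ E]

theorem infDist_eq_sqrt_norm_sq_sub (K : Submodule ℝ E) [K.HasOrthogonalProjection] (a : E) :
    infDist a K = √(‖a‖ ^ 2 - ‖K.starProjection a‖ ^ 2) := by
  have hdist : infDist a K = ‖a - K.starProjection a‖ := by
    rw [infDist_eq_iInf, starProjection_minimal]
    exact iInf_congr fun y => dist_eq_norm _ _
  rw [hdist, norm_sq_eq_add_norm_sq_starProjection a K, starProjection_orthogonal_val,
    add_sub_cancel_left, Real.sqrt_sq (norm_nonneg _)]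

theorem adjoint_orthogonalProjectionOnto_comp_subtypeL [CompleteSpace E] (P Q : Submodule ℝ E)
    [CompleteSpace P] [CompleteSpace Q] :
    adjoint (Q.orthogonalProjectionOnto ∘L P.subtypeL) =
      P.orthogonalProjectionOnto ∘L Q.subtypeL := by
  rw [adjoint_comp, adjoint_orthogonalProjectionOnto, adjoint_subtypeL]

end Submodule

theorem rho_eq_sqrt_one_sub_minModulus_sq {n : ℕ} (P Q : Submodule ℝ (EuclideanSpace ℝ (Fin n)))
    [Nontrivial P] :
    rho P Q = √(1 - minModulus (Q.orthogonalProjectionOnto ∘L P.subtypeL) ^ 2) := by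
  set T := Q.orthogonalProjectionOnto ∘L P.subtypeL
  have hset : {d : ℝ | ∃ a ∈ P, ‖a‖ = 1 ∧ d = infDist a (Q : Set (EuclideanSpace ℝ (Fin n)))} =
      (fun x : P => √(1 - ‖T x‖ ^ 2)) '' sphere (0 : P) 1 := by
    ext d
    constructor
    · rintro ⟨a, haP, ha, rfl⟩
      refine ⟨⟨a, haP⟩, by simpa using ha, ?_⟩
      rw [Q.infDist_eq_sqrt_norm_sq_sub, ha, one_pow]
      rfl
    · rintro ⟨x, hx, rfl⟩
      have hx : ‖(x : EuclideanSpace ℝ (Fin n))‖ = 1 := by simpa using hx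
      refine ⟨x, x.2, hx, ?_⟩
      rw [Q.infDist_eq_sqrt_norm_sq_sub, hx, one_pow]
      rfl
  have hanti : AntitoneOn (fun t : ℝ => √(1 - t ^ 2)) ((fun x => ‖T x‖) '' sphere (0 : P) 1) := by
    rintro _ ⟨x, -, rfl⟩ _ ⟨y, -, rfl⟩ hxy
    exact Real.sqrt_le_sqrt (by nlinarith [norm_nonneg (T x)])
  rw [rho, hset, ← image_image (fun t : ℝ => √(1 - t ^ 2)) (fun x => ‖T x‖), minModulus]
  exact (hanti.map_csInf_of_continuousWithinAt (by fun_prop)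
    ((NormedSpace.sphere_nonempty.mpr zero_le_one).image _)
    ⟨0, by rintro _ ⟨x, -, rfl⟩; exact norm_nonneg _⟩).symm

/-- `ρ` is symmetric on the Grassmannian of `m`-dimensional subspaces. -/
theorem stmt9 {n m : ℕ}
    (P Q : Submodule ℝ (EuclideanSpace ℝ (Fin n)))
    (hP : Module.finrank ℝ P = m) (hQ : Module.finrank ℝ Q = m) :
    rho P Q = rho Q P := by
  rcases Nat.eq_zero_or_pos m with rfl | hm
  · rw [Submodule.finrank_eq_zero.mp hP, Submodule.finrank_eq_zero.mp hQ]
  have : Nontrivial P := nontrivial_of_finrank_pos (hP ▸ hm)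
  have : Nontrivial Q := nontrivial_of_finrank_pos (hQ ▸ hm)
  rw [rho_eq_sqrt_one_sub_minModulus_sq, rho_eq_sqrt_one_sub_minModulus_sq,
    ← Submodule.adjoint_orthogonalProjectionOnto_comp_subtypeL P Q,
    minModulus_adjoint (hP.trans hQ.symm)]
end
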